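/- If k + h < m, the map Φ ↦ θ ⩕ Φ from Λ^k V* ⊗ Λ^h W to Λ^{k+1} V* ⊗ Λ^{h+1} W is injective; moreover θ ⩕ Φ = 0 implies tr^i Φ = 0 for all i = 0,…,min{k,h}. -/

import Mathlib

/-!
On bidegree `(p, q)` the trace and the solder element satisfy the commutation relation
`tr (θ ⩕ Φ) = (m - p - q) Φ + θ ⩕ tr Φ`: this follows from the antiderivation rule for the two
interior products and the "number operator" identity `∑ₐ εₐ θᵃ ∧ ι_{uₐ} = p` on `p`-forms.
Iterating it gives `tr^{j+1} (θ ⩕ Φ) = θ ⩕ tr^{j+1} Φ + (j + 1)(m - k - h + j) tr^j Φ` for `Φ` of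
bidegree `(k, h)`. If `θ ⩕ Φ = 0`, then `tr^{min k h + 1} Φ = 0` for degree reasons, and since
`k + h < m` makes every coefficient positive, descending induction gives `tr^j Φ = 0` for all `j`,
in particular `Φ = 0`.
-/

open TensorProduct ExteriorAlgebra

noncomputable section

/-- Wedge product of a finite family of vectors, as an element of the exterior algebra. -/
def wedgeL {M : Type} [AddCommGroup M] [Module ℝ M] {n : ℕ} (v : Fin n → M) :
    ExteriorAlgebra ℝ M :=
  (List.ofFn fun i => ι ℝ (v i)).prod

/-- The bigraded algebra `Λ V* ⊗ Λ ℝ^m` of vector-valued forms, with `U` playing the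
role of `V*` and `Fin m → ℝ` the role of `W = ℝ^m`. -/
abbrev Omega (U : Type) [AddCommGroup U] [Module ℝ U] (m : ℕ) : Type :=
  ExteriorAlgebra ℝ U ⊗[ℝ] ExteriorAlgebra ℝ (Fin m → ℝ)

/-- The subspace of bidegree `(k, h)` elements: `Λ^k U ⊗ Λ^h ℝ^m`. -/
def bideg (U : Type) [AddCommGroup U] [Module ℝ U] (m k h : ℕ) :
    Submodule ℝ (Omega U m) :=
  Submodule.map₂ (TensorProduct.mk ℝ _ _) (⋀[ℝ]^k U) (⋀[ℝ]^h (Fin m → ℝ))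

/-- The solder element `θ = Σ_a θ^a ⊗ T_a`, where `T_a` is the standard basis of `ℝ^m`. -/
def solder {U : Type} [AddCommGroup U] [Module ℝ U] {m : ℕ} (u : Fin m → U) : Omega U m :=
  ∑ a, ι ℝ (u a) ⊗ₜ[ℝ] ι ℝ (Pi.single a 1)

/-- The composite volume element `ν = ν_g ⊗ n_h` (wedge of the dual orthonormal basis
tensor the wedge of the standard basis). -/
def vol {U : Type} [AddCommGroup U] [Module ℝ U] {m : ℕ} (u : Fin m → U) : Omega U m :=
  wedgeL u ⊗ₜ[ℝ] wedgeL (fun a : Fin m => Pi.single a (1 : ℝ))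

/-- The trace operator: contraction with `θ^♯`, i.e. `tr Φ = Σ_a (ι_{(u a)^♯} ⊗ ι_{(T a)^♭}) Φ`. -/
def trOp {U : Type} [AddCommGroup U] [Module ℝ U] {m : ℕ} (u : Fin m → U)
    (cU : U → Module.End ℝ (ExteriorAlgebra ℝ U))
    (cW : (Fin m → ℝ) → Module.End ℝ (ExteriorAlgebra ℝ (Fin m → ℝ))) :
    Module.End ℝ (Omega U m) :=
  ∑ a, TensorProduct.map (cU (u a)) (cW (Pi.single a 1))

section Contraction

variable {M : Type} [AddCommGroup M] [Module ℝ M]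

structure IsContraction (B : M →ₗ[ℝ] M →ₗ[ℝ] ℝ) (c : M → Module.End ℝ (ExteriorAlgebra ℝ M)) :
    Prop where
  apply_one : ∀ x, c x 1 = 0
  apply_ι_mul : ∀ x y (ω : ExteriorAlgebra ℝ M), c x (ι ℝ y * ω) = B x y • ω - ι ℝ y * c x ω

lemma wedgeL_cons {n : ℕ} (x : M) (v : Fin n → M) :
    wedgeL (Fin.cons x v) = ι ℝ x * wedgeL v := by
  simp [wedgeL, List.ofFn_succ]

lemma isContraction_of_apply_wedgeL {B : M →ₗ[ℝ] M →ₗ[ℝ] ℝ}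
    {c : M → Module.End ℝ (ExteriorAlgebra ℝ M)}
    (hc : ∀ (x : M) (n : ℕ) (v : Fin n → M),
      c x (wedgeL v) = ∑ i : Fin n, ((-1 : ℝ) ^ (i : ℕ) * B x (v i)) •
        ((List.ofFn fun j => ι ℝ (v j)).eraseIdx (i : ℕ)).prod) :
    IsContraction B c where
  apply_one x := by simpa [wedgeL] using hc x 0 Fin.elim0
  apply_ι_mul x y ω := by
    let lhs : Module.End ℝ (ExteriorAlgebra ℝ M) := c x ∘ₗ LinearMap.mulLeft ℝ (ι ℝ y)
    let rhs : Module.End ℝ (ExteriorAlgebra ℝ M) :=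
      B x y • LinearMap.id - LinearMap.mulLeft ℝ (ι ℝ y) ∘ₗ c x
    have hwedge : Set.EqOn lhs rhs (Set.range fun v : Σ n, (Fin n → M) => ιMulti ℝ v.1 v.2) := by
      rintro _ ⟨⟨n, v⟩, rfl⟩
      simp only [lhs, rhs, LinearMap.comp_apply, LinearMap.mulLeft_apply, LinearMap.sub_apply,
        LinearMap.smul_apply, LinearMap.id_apply]
      change c x (ι ℝ y * wedgeL v) = B x y • wedgeL v - ι ℝ y * c x (wedgeL v)
      rw [← wedgeL_cons, hc, hc, Fin.sum_univ_succ, Finset.mul_sum, sub_eq_add_neg,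
        ← Finset.sum_neg_distrib]
      simp only [List.ofFn_succ, Fin.cons_zero, Fin.cons_succ, Fin.val_zero, Fin.val_succ,
        List.eraseIdx_cons_zero, List.eraseIdx_cons_succ, List.prod_cons, pow_zero, one_mul,
        pow_succ, mul_neg_one, neg_mul, neg_smul, mul_smul_comm]
      rfl
    exact LinearMap.eqOn_span hwedge ((ιMulti_span ℝ M).symm ▸ Submodule.mem_top)

lemma ι_mul_mem_exteriorPower (y : M) {n : ℕ} {ω : ExteriorAlgebra ℝ M}
    (hω : ω ∈ ⋀[ℝ]^n M) : ι ℝ y * ω ∈ ⋀[ℝ]^(n + 1) M := by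
  rw [exteriorPower, pow_succ']
  exact Submodule.mul_mem_mul (LinearMap.mem_range_self _ _) hω

namespace IsContraction

variable {B : M →ₗ[ℝ] M →ₗ[ℝ] ℝ} {c : M → Module.End ℝ (ExteriorAlgebra ℝ M)}

lemma apply_eq_zero_of_mem_exteriorPower_zero (hc : IsContraction B c) (x : M)
    {ω : ExteriorAlgebra ℝ M} (hω : ω ∈ ⋀[ℝ]^0 M) : c x ω = 0 := by
  rw [exteriorPower, pow_zero] at hω
  obtain ⟨r, rfl⟩ := Submodule.mem_one.mp hω
  rw [Algebra.algebraMap_eq_smul_one, map_smul, hc.apply_one, smul_zero]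

lemma apply_mem_exteriorPower (hc : IsContraction B c) (x : M) :
    ∀ {n : ℕ} {ω : ExteriorAlgebra ℝ M}, ω ∈ ⋀[ℝ]^(n + 1) M → c x ω ∈ ⋀[ℝ]^n M
  | n, ω, hω => by
    rw [exteriorPower, pow_succ'] at hω
    refine Submodule.mul_induction_on hω ?_ fun _ _ h₁ h₂ => map_add (c x) _ _ ▸ add_mem h₁ h₂
    rintro _ ⟨y, rfl⟩ ω hω
    rw [hc.apply_ι_mul]
    refine sub_mem (Submodule.smul_mem _ _ hω) ?_
    cases n with
    | zero => simp [hc.apply_eq_zero_of_mem_exteriorPower_zero x hω]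
    | succ n => exact ι_mul_mem_exteriorPower y (hc.apply_mem_exteriorPower x hω)

lemma apply_mem_exteriorPower_sub_one (hc : IsContraction B c) (x : M) {n : ℕ}
    {ω : ExteriorAlgebra ℝ M} (hω : ω ∈ ⋀[ℝ]^n M) : c x ω ∈ ⋀[ℝ]^(n - 1) M := by
  cases n with
  | zero => simp [hc.apply_eq_zero_of_mem_exteriorPower_zero x hω]
  | succ n => exact hc.apply_mem_exteriorPower x hω

lemma sum_smul_ι_mul_apply (hc : IsContraction B c) {κ : Type*} [Fintype κ] (f : κ → M)
    (ε : κ → ℝ) (hf : ∀ y, ∑ a, (ε a * B (f a) y) • f a = y) :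
    ∀ {n : ℕ} {ω : ExteriorAlgebra ℝ M}, ω ∈ ⋀[ℝ]^n M →
      ∑ a, ε a • (ι ℝ (f a) * c (f a) ω) = (n : ℝ) • ω
  | 0, ω, hω => by simp [hc.apply_eq_zero_of_mem_exteriorPower_zero _ hω]
  | n + 1, ω, hω => by
    rw [exteriorPower, pow_succ'] at hω
    refine Submodule.mul_induction_on hω ?_ fun _ _ h₁ h₂ => by
      simp only [map_add, mul_add, smul_add, Finset.sum_add_distrib, h₁, h₂]
    rintro _ ⟨y, rfl⟩ ω hω
    have hy : ∑ a, (ε a * B (f a) y) • ι ℝ (f a) = ι ℝ y := by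
      conv_rhs => rw [← hf y, map_sum]
      simp only [map_smul]
    have hswap : ∀ a, ι ℝ (f a) * ι ℝ y = -(ι ℝ y * ι ℝ (f a)) := fun a =>
      eq_neg_of_add_eq_zero_left (ι_add_mul_swap _ _)
    calc ∑ a, ε a • (ι ℝ (f a) * c (f a) (ι ℝ y * ω))
        = (∑ a, (ε a * B (f a) y) • ι ℝ (f a)) * ω
          + ι ℝ y * ∑ a, ε a • (ι ℝ (f a) * c (f a) ω) := by
          simp only [hc.apply_ι_mul, mul_sub, ← mul_assoc, hswap, neg_mul, sub_neg_eq_add,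
            smul_add, Finset.sum_add_distrib, Finset.sum_mul, Finset.mul_sum, mul_smul_comm,
            smul_mul_assoc, mul_smul]
      _ = ((n + 1 : ℕ) : ℝ) • (ι ℝ y * ω) := by
          rw [hy, sum_smul_ι_mul_apply hc f ε hf hω, mul_smul_comm]
          push_cast
          module

end IsContraction

end Contraction

lemma Module.Basis.sum_mul_apply_smul_eq {κ M : Type*} [Fintype κ] [DecidableEq κ]
    [AddCommGroup M] [Module ℝ M] (b : Module.Basis κ ℝ M) {B : M →ₗ[ℝ] M →ₗ[ℝ] ℝ} {ε : κ → ℝ}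
    (hε : ∀ a, ε a * ε a = 1) (hB : ∀ a a', B (b a) (b a') = if a = a' then ε a else 0)
    (x : M) : ∑ a, (ε a * B (b a) x) • b a = x := by
  have hBx : ∀ a, B (b a) x = ε a * b.repr x a := fun a => by
    conv_lhs => rw [← b.sum_repr x]
    simp only [map_sum, map_smul, hB, smul_eq_mul, mul_ite, mul_zero, Finset.sum_ite_eq,
      Finset.mem_univ, if_true]
    ring
  conv_rhs => rw [← b.sum_repr x]
  simp only [hBx, ← mul_assoc, hε, one_mul]

section Bigraded

variable {U : Type} [AddCommGroup U] [Module ℝ U] {m : ℕ}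

lemma solder_mul_tmul (f : Fin m → U) (x : ExteriorAlgebra ℝ U)
    (y : ExteriorAlgebra ℝ (Fin m → ℝ)) :
    solder f * (x ⊗ₜ[ℝ] y) = ∑ a, (ι ℝ (f a) * x) ⊗ₜ[ℝ] (ι ℝ (Pi.single a 1) * y) := by
  simp only [solder, Finset.sum_mul, Algebra.TensorProduct.tmul_mul_tmul]

lemma trOp_tmul (f : Fin m → U) (cU : U → Module.End ℝ (ExteriorAlgebra ℝ U))
    (cW : (Fin m → ℝ) → Module.End ℝ (ExteriorAlgebra ℝ (Fin m → ℝ)))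
    (x : ExteriorAlgebra ℝ U) (y : ExteriorAlgebra ℝ (Fin m → ℝ)) :
    trOp f cU cW (x ⊗ₜ[ℝ] y) = ∑ a, cU (f a) x ⊗ₜ[ℝ] cW (Pi.single a 1) y := by
  simp only [trOp, LinearMap.sum_apply, TensorProduct.map_tmul]

variable {g : U →ₗ[ℝ] U →ₗ[ℝ] ℝ} {η : (Fin m → ℝ) →ₗ[ℝ] (Fin m → ℝ) →ₗ[ℝ] ℝ}
  {cU : U → Module.End ℝ (ExteriorAlgebra ℝ U)}
  {cW : (Fin m → ℝ) → Module.End ℝ (ExteriorAlgebra ℝ (Fin m → ℝ))}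

lemma trOp_mem_bideg (hcU : IsContraction g cU) (hcW : IsContraction η cW) (f : Fin m → U)
    {p q : ℕ} {Φ : Omega U m} (hΦ : Φ ∈ bideg U m p q) :
    trOp f cU cW Φ ∈ bideg U m (p - 1) (q - 1) := by
  refine (Submodule.map₂_le.mpr fun α hα β hβ => ?_ :
    bideg U m p q ≤ (bideg U m (p - 1) (q - 1)).comap (trOp f cU cW)) hΦ
  rw [Submodule.mem_comap, TensorProduct.mk_apply, trOp_tmul]
  exact Submodule.sum_mem _ fun a _ => Submodule.apply_mem_map₂ _
    (hcU.apply_mem_exteriorPower_sub_one _ hα) (hcW.apply_mem_exteriorPower_sub_one _ hβ)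

lemma trOp_pow_mem_bideg (hcU : IsContraction g cU) (hcW : IsContraction η cW) (f : Fin m → U)
    {p q : ℕ} {Φ : Omega U m} (hΦ : Φ ∈ bideg U m p q) (i : ℕ) :
    (trOp f cU cW ^ i) Φ ∈ bideg U m (p - i) (q - i) := by
  induction i with
  | zero => simpa using hΦ
  | succ i ih =>
    rw [pow_succ', Module.End.mul_apply, ← Nat.sub_sub, ← Nat.sub_sub]
    exact trOp_mem_bideg hcU hcW f ih

lemma trOp_eq_zero_of_min_eq_zero (hcU : IsContraction g cU) (hcW : IsContraction η cW)
    (f : Fin m → U) {p q : ℕ} {Φ : Omega U m} (hΦ : Φ ∈ bideg U m p q) (hpq : min p q = 0) :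
    trOp f cU cW Φ = 0 := by
  refine (Submodule.map₂_le.mpr fun α hα β hβ => ?_ : bideg U m p q ≤ LinearMap.ker _) hΦ
  rw [LinearMap.mem_ker, TensorProduct.mk_apply, trOp_tmul]
  refine Finset.sum_eq_zero fun a _ => ?_
  rcases Nat.min_eq_zero_iff.mp hpq with rfl | rfl
  · rw [hcU.apply_eq_zero_of_mem_exteriorPower_zero _ hα, TensorProduct.zero_tmul]
  · rw [hcW.apply_eq_zero_of_mem_exteriorPower_zero _ hβ, TensorProduct.tmul_zero]

end Bigraded

section Commutation

variable {U : Type} [AddCommGroup U] [Module ℝ U] {m : ℕ}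
  {g : U →ₗ[ℝ] U →ₗ[ℝ] ℝ} {η : (Fin m → ℝ) →ₗ[ℝ] (Fin m → ℝ) →ₗ[ℝ] ℝ}
  {cU : U → Module.End ℝ (ExteriorAlgebra ℝ U)}
  {cW : (Fin m → ℝ) → Module.End ℝ (ExteriorAlgebra ℝ (Fin m → ℝ))}
  {u : Module.Basis (Fin m) ℝ U} {ε : Fin m → ℝ}

lemma trOp_solder_mul_tmul (hcU : IsContraction g cU) (hcW : IsContraction η cW)
    (hε : ∀ a, ε a * ε a = 1) (hg : ∀ a b, g (u a) (u b) = if a = b then ε a else 0)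
    (hη : ∀ a b, η (Pi.single a 1) (Pi.single b 1) = if a = b then ε a else 0)
    {p q : ℕ} {α : ExteriorAlgebra ℝ U} {β : ExteriorAlgebra ℝ (Fin m → ℝ)}
    (hα : α ∈ ⋀[ℝ]^p U) (hβ : β ∈ ⋀[ℝ]^q (Fin m → ℝ)) :
    trOp u cU cW (solder u * (α ⊗ₜ[ℝ] β))
      = ((m : ℝ) - p - q) • (α ⊗ₜ[ℝ] β) + solder u * trOp u cU cW (α ⊗ₜ[ℝ] β) := by
  have hW : ∀ y, ∑ a, (ε a * η (Pi.single a 1) y) • (Pi.single a 1 : Fin m → ℝ) = y := by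
    simpa using (Pi.basisFun ℝ (Fin m)).sum_mul_apply_smul_eq hε (by simpa using hη)
  have hnumU := hcU.sum_smul_ι_mul_apply u ε (u.sum_mul_apply_smul_eq hε hg) hα
  have hnumW := hcW.sum_smul_ι_mul_apply (fun a => Pi.single a 1) ε hW hβ
  calc trOp u cU cW (solder u * (α ⊗ₜ[ℝ] β))
      = ∑ a, ∑ b, ((g (u b) (u a) * η (Pi.single b 1) (Pi.single a 1)) • (α ⊗ₜ[ℝ] β)
          - g (u b) (u a) • (α ⊗ₜ[ℝ] (ι ℝ (Pi.single a 1) * cW (Pi.single b 1) β))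
          - η (Pi.single b 1) (Pi.single a 1) • ((ι ℝ (u a) * cU (u b) α) ⊗ₜ[ℝ] β)
          + (ι ℝ (u a) * cU (u b) α) ⊗ₜ[ℝ] (ι ℝ (Pi.single a 1) * cW (Pi.single b 1) β)) := by
        simp only [solder_mul_tmul, map_sum, trOp_tmul, hcU.apply_ι_mul, hcW.apply_ι_mul,
          TensorProduct.sub_tmul, TensorProduct.tmul_sub, ← TensorProduct.smul_tmul',
          TensorProduct.tmul_smul]
        refine Finset.sum_congr rfl fun a _ => Finset.sum_congr rfl fun b _ => ?_
        module
    _ = ∑ _a : Fin m, α ⊗ₜ[ℝ] β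
          - α ⊗ₜ[ℝ] (∑ a, ε a • (ι ℝ (Pi.single a 1) * cW (Pi.single a 1) β))
          - (∑ a, ε a • (ι ℝ (u a) * cU (u a) α)) ⊗ₜ[ℝ] β
          + solder u * trOp u cU cW (α ⊗ₜ[ℝ] β) := by
        simp only [Finset.sum_add_distrib, Finset.sum_sub_distrib, hg, hη, ite_zero_mul_ite_zero,
          and_self, ite_smul, zero_smul, Finset.sum_ite_eq', Finset.mem_univ, if_true, hε,
          one_smul, TensorProduct.tmul_sum, TensorProduct.sum_tmul, TensorProduct.tmul_smul,
          TensorProduct.smul_tmul', trOp_tmul, Finset.mul_sum, solder_mul_tmul]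
        exact congrArg _ Finset.sum_comm
    _ = ((m : ℝ) - p - q) • (α ⊗ₜ[ℝ] β) + solder u * trOp u cU cW (α ⊗ₜ[ℝ] β) := by
        rw [hnumU, hnumW, Finset.sum_const, Finset.card_univ, Fintype.card_fin,
          TensorProduct.tmul_smul, ← TensorProduct.smul_tmul', ← Nat.cast_smul_eq_nsmul ℝ,
          sub_smul, sub_smul]
        abel

lemma trOp_solder_mul (hcU : IsContraction g cU) (hcW : IsContraction η cW)
    (hε : ∀ a, ε a * ε a = 1) (hg : ∀ a b, g (u a) (u b) = if a = b then ε a else 0)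
    (hη : ∀ a b, η (Pi.single a 1) (Pi.single b 1) = if a = b then ε a else 0)
    {p q : ℕ} {Φ : Omega U m} (hΦ : Φ ∈ bideg U m p q) :
    trOp u cU cW (solder u * Φ) = ((m : ℝ) - p - q) • Φ + solder u * trOp u cU cW Φ := by
  let lhs : Module.End ℝ (Omega U m) := trOp u cU cW ∘ₗ LinearMap.mulLeft ℝ (solder u)
  let rhs : Module.End ℝ (Omega U m) :=
    ((m : ℝ) - p - q) • LinearMap.id + LinearMap.mulLeft ℝ (solder u) ∘ₗ trOp u cU cW
  have hle : bideg U m p q ≤ LinearMap.eqLocus lhs rhs := Submodule.map₂_le.mpr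
    fun α hα β hβ => trOp_solder_mul_tmul hcU hcW hε hg hη hα hβ
  exact hle hΦ

end Commutation

lemma pow_succ_apply_apply_eq_of_commutator {R E : Type*} [Semiring R] [AddCommMonoid E]
    [Module R E] {T L : Module.End R E} {c : ℕ → R} {Φ : E}
    (hcomm : ∀ i, T (L ((T ^ i) Φ)) = c i • (T ^ i) Φ + L (T ((T ^ i) Φ))) (j : ℕ) :
    (T ^ (j + 1)) (L Φ) = L ((T ^ (j + 1)) Φ) + (∑ i ∈ Finset.range (j + 1), c i) • (T ^ j) Φ := by
  have hT : ∀ k, T ((T ^ k) Φ) = (T ^ (k + 1)) Φ := fun k => by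
    rw [pow_succ', Module.End.mul_apply]
  induction j with
  | zero => simpa [add_comm] using hcomm 0
  | succ j ih =>
    rw [pow_succ' T (j + 1), Module.End.mul_apply, ih, map_add, map_smul, hcomm,
      Finset.sum_range_succ _ (j + 1), add_smul]
    simp only [Module.End.mul_apply, hT]
    abel

lemma eq_zero_of_apply_eq_zero_of_commutator {𝕜 E : Type*} [Field 𝕜] [LinearOrder 𝕜]
    [IsStrictOrderedRing 𝕜] [AddCommGroup E] [Module 𝕜 E] {T L : Module.End 𝕜 E} {c : ℕ → 𝕜}
    {Φ : E} (hc : ∀ i, 0 < c i)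
    (hcomm : ∀ i, T (L ((T ^ i) Φ)) = c i • (T ^ i) Φ + L (T ((T ^ i) Φ)))
    (hL : L Φ = 0) {n : ℕ} (hn : (T ^ n) Φ = 0) : Φ = 0 := by
  have hdescend : ∀ j, (T ^ (j + 1)) Φ = 0 → (T ^ j) Φ = 0 := fun j hj => by
    have hsum : 0 < ∑ i ∈ Finset.range (j + 1), c i :=
      Finset.sum_pos (fun i _ => hc i) Finset.nonempty_range_add_one
    have := pow_succ_apply_apply_eq_of_commutator hcomm j
    rw [hL, map_zero, hj, map_zero, zero_add, eq_comm, smul_eq_zero] at this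
    exact this.resolve_left hsum.ne'
  induction n with
  | zero => simpa using hn
  | succ n ih => exact ih (hdescend n hn)

theorem stmt_15_general (m s k h : ℕ) (hkh : k + h < m)
    (U : Type) [AddCommGroup U] [Module ℝ U]
    (η : (Fin m → ℝ) →ₗ[ℝ] (Fin m → ℝ) →ₗ[ℝ] ℝ)
    (hη : ∀ v w, η v w = ∑ a : Fin _, (if (a : ℕ) < s then (-1 : ℝ) else 1) * v a * w a)
    (g : U →ₗ[ℝ] U →ₗ[ℝ] ℝ) (u : Module.Basis (Fin m) ℝ U)
    (hg : ∀ a b, g (u a) (u b) = if a = b then (if (a : ℕ) < s then (-1 : ℝ) else 1) else 0)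
    (cU : U → Module.End ℝ (ExteriorAlgebra ℝ U))
    (hcU : ∀ (x : U) (n : ℕ) (v : Fin n → U),
      cU x (wedgeL v) = ∑ i : Fin n, ((-1 : ℝ) ^ (i : ℕ) * g x (v i)) •
        ((List.ofFn fun j => ι ℝ (v j)).eraseIdx (i : ℕ)).prod)
    (cW : (Fin m → ℝ) → Module.End ℝ (ExteriorAlgebra ℝ (Fin m → ℝ)))
    (hcW : ∀ (y : Fin m → ℝ) (n : ℕ) (v : Fin n → (Fin m → ℝ)),
      cW y (wedgeL v) = ∑ i : Fin n, ((-1 : ℝ) ^ (i : ℕ) * η y (v i)) •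
        ((List.ofFn fun j => ι ℝ (v j)).eraseIdx (i : ℕ)).prod)
    :
    (∀ Φ Ψ, Φ ∈ bideg U m k h → Ψ ∈ bideg U m k h →
      solder (fun a => u a) * Φ = solder (fun a => u a) * Ψ → Φ = Ψ) ∧
    (∀ Φ, Φ ∈ bideg U m k h → solder (fun a => u a) * Φ = 0 →
      ∀ i ≤ min k h, (trOp (fun a => u a) cU cW ^ i) Φ = 0) := by
  have hε : ∀ a : Fin m, (if (a : ℕ) < s then (-1 : ℝ) else 1) * (if (a : ℕ) < s then -1 else 1)
      = 1 := fun a => by split_ifs <;> norm_num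
  have hηe : ∀ a b : Fin m, η (Pi.single a 1) (Pi.single b 1)
      = if a = b then (if (a : ℕ) < s then (-1 : ℝ) else 1) else 0 := fun a b => by
    rcases eq_or_ne a b with rfl | hab
    · simp [hη, Pi.single_apply]
    · simp [hη, Pi.single_apply, hab, hab.symm]
  have hU := isContraction_of_apply_wedgeL hcU
  have hW := isContraction_of_apply_wedgeL hcW
  have hker : ∀ Φ ∈ bideg U m k h, solder (fun a => u a) * Φ = 0 → Φ = 0 := fun Φ hΦ h0 => by
    refine eq_zero_of_apply_eq_zero_of_commutator (L := LinearMap.mulLeft ℝ (solder u))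
      (c := fun i => (m : ℝ) - (k - i : ℕ) - (h - i : ℕ)) (fun i => ?_)
      (fun i => trOp_solder_mul hU hW hε hg hηe (trOp_pow_mem_bideg hU hW u hΦ i)) h0
      (n := min k h + 1) ?_
    · have : ((k - i : ℕ) : ℝ) + (h - i : ℕ) < m := by exact_mod_cast (by omega)
      linarith
    · rw [pow_succ', Module.End.mul_apply]
      exact trOp_eq_zero_of_min_eq_zero hU hW u (trOp_pow_mem_bideg hU hW u hΦ _) (by omega)
  refine ⟨fun Φ Ψ hΦ hΨ he => sub_eq_zero.mp (hker _ (sub_mem hΦ hΨ) ?_), fun Φ hΦ h0 i _ => ?_⟩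
  · rw [mul_sub, he, sub_self]
  · rw [hker Φ hΦ h0, map_zero]

/-- For `k + h < m`, the map `Φ ↦ θ ⩕ Φ` is injective on bidegree `(k,h)`; moreover
`θ ⩕ Φ = 0` implies `tr^i Φ = 0` for all `i = 0, …, min{k,h}`. -/
theorem stmt_15 (m r s k h : ℕ) (hm : r + s = m) (hkh : k + h < m)
    (U : Type) [AddCommGroup U] [Module ℝ U]
    (η : (Fin m → ℝ) →ₗ[ℝ] (Fin m → ℝ) →ₗ[ℝ] ℝ)
    (hη : ∀ v w, η v w = ∑ a : Fin _, (if (a : ℕ) < s then (-1 : ℝ) else 1) * v a * w a)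
    (g : U →ₗ[ℝ] U →ₗ[ℝ] ℝ) (u : Module.Basis (Fin m) ℝ U)
    (hg : ∀ a b, g (u a) (u b) = if a = b then (if (a : ℕ) < s then (-1 : ℝ) else 1) else 0)
    (cU : U → Module.End ℝ (ExteriorAlgebra ℝ U))
    (hcU : ∀ (x : U) (n : ℕ) (v : Fin n → U),
      cU x (wedgeL v) = ∑ i : Fin n, ((-1 : ℝ) ^ (i : ℕ) * g x (v i)) •
        ((List.ofFn fun j => ι ℝ (v j)).eraseIdx (i : ℕ)).prod)
    (cW : (Fin m → ℝ) → Module.End ℝ (ExteriorAlgebra ℝ (Fin m → ℝ)))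
    (hcW : ∀ (y : Fin m → ℝ) (n : ℕ) (v : Fin n → (Fin m → ℝ)),
      cW y (wedgeL v) = ∑ i : Fin n, ((-1 : ℝ) ^ (i : ℕ) * η y (v i)) •
        ((List.ofFn fun j => ι ℝ (v j)).eraseIdx (i : ℕ)).prod)
    :
    (∀ Φ Ψ, Φ ∈ bideg U m k h → Ψ ∈ bideg U m k h →
      solder (fun a => u a) * Φ = solder (fun a => u a) * Ψ → Φ = Ψ) ∧
    (∀ Φ, Φ ∈ bideg U m k h → solder (fun a => u a) * Φ = 0 →
      ∀ i ≤ min k h, (trOp (fun a => u a) cU cW ^ i) Φ = 0) :=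
  stmt_15_general m s k h hkh U η hη g u hg cU hcU cW hcW
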